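/- Every word v ∈ W^(◦,k+1) admits a unique decomposition v = a(w¹)a(w²)⋯a(wⁿ) where each wⁱ ∈ W^(◦,k) and a(w) := ◦ w •, such that within each factor a(wⁱ) all proper nonempty prefixes have strictly positive color balance. -/

import Mathlib

/-- Words on the two-letter alphabet {◦,•}: `true` = ◦ (white), `false` = • (black). -/
abbrev Word := List Bool

/-- Color balance: number of white letters minus number of black letters. -/
def cb (w : Word) : ℤ := (w.count true : ℤ) - (w.count false : ℤ)

/-- Conjugation: reverse the word and swap the colors. -/
def wconj (w : Word) : Word := (w.map (fun b => !b)).reverse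

/-- Elementary cancellation: deletion of an adjacent pair ◦• or •◦. -/
def ECancel (w w' : Word) : Prop :=
  ∃ (u v : Word) (x : Bool), w = u ++ x :: (!x) :: v ∧ w' = u ++ v

/-- Concatenation of a list of words. -/
def cat (L : List Word) : Word := L.foldr (· ++ ·) []

/-- `W^(k)`: words whose color balance is divisible by `k`. -/
def Wmod (k : ℕ) : Set Word := {w | (k : ℤ) ∣ cb w}

/-- `W^(◦,k)`: words of balance 0 all of whose prefix balances lie in `[0,k]`. -/
def Wcirc (k : ℕ) : Set Word :=
  {w | cb w = 0 ∧ ∀ l : ℕ, 0 ≤ cb (w.take l) ∧ cb (w.take l) ≤ (k : ℤ)}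

/-- `W^(•,k)`: words of balance 0 all of whose prefix balances lie in `[-k,0]`. -/
def Wbul (k : ℕ) : Set Word :=
  {w | cb w = 0 ∧ ∀ l : ℕ, -(k : ℤ) ≤ cb (w.take l) ∧ cb (w.take l) ≤ 0}

/-- `W^(◦,∞)`: words of balance 0 with all prefix balances nonnegative. -/
def WcircInf : Set Word := {w | cb w = 0 ∧ ∀ l : ℕ, 0 ≤ cb (w.take l)}

/-- `W^(•,∞)`: words of balance 0 with all prefix balances nonpositive. -/
def WbulInf : Set Word := {w | cb w = 0 ∧ ∀ l : ℕ, cb (w.take l) ≤ 0}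

/-- `a(w) = ◦ w •`. -/
def aw (w : Word) : Word := true :: (w ++ [false])

/-
A nonempty word of `W^(◦,∞)` splits at the first return of its prefix balance to `0`. The prefix
up to that return is primitive: its proper nonempty prefixes have positive balance, so it starts
with ◦, ends with •, and has the form `a(w)` where the prefix balances of `w` are one less than
those of `a(w)`; hence `w ∈ W^(◦,k)` when `a(w) ∈ W^(◦,k+1)`. Iterating on the rest gives the
factorization. Uniqueness holds because no nonempty balanced word is a proper prefix of a primitive
word, so primitive words form a prefix code.
-/

@[simp] lemma cb_nil : cb [] = 0 := rfl

@[simp] lemma cb_cons (b : Bool) (w : Word) : cb (b :: w) = (if b then 1 else -1) + cb w := by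
  cases b <;> simp [cb] <;> ring

@[simp] lemma cb_append (u v : Word) : cb (u ++ v) = cb u + cb v := by
  simp only [cb, List.count_append]; push_cast; ring

@[simp] lemma cb_aw (w : Word) : cb (aw w) = cb w := by
  simp [aw]

lemma aw_injective : Function.Injective aw := by
  intro w w' h
  simpa [aw] using h

@[simp] lemma cat_nil : cat [] = [] := rfl

@[simp] lemma cat_cons (u : Word) (U : List Word) : cat (u :: U) = u ++ cat U := rfl

lemma cb_take_aw_succ {w : Word} {l : ℕ} (hl : l ≤ w.length) :
    cb ((aw w).take (l + 1)) = 1 + cb (w.take l) := by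
  simp [aw, List.take_append_of_le_length hl]

lemma Wcirc_subset_WcircInf (k : ℕ) : Wcirc k ⊆ WcircInf :=
  fun _ hw => ⟨hw.1, fun l => (hw.2 l).1⟩

lemma mem_Wcirc_of_append {k : ℕ} {u r : Word} (hu : cb u = 0) (h : u ++ r ∈ Wcirc k) :
    u ∈ Wcirc k ∧ r ∈ Wcirc k := by
  obtain ⟨hcb, hpre⟩ := h
  refine ⟨⟨hu, fun l => ?_⟩, ⟨by simpa [hu] using hcb, fun l => ?_⟩⟩
  · rcases le_or_gt l u.length with hl | hl
    · simpa [List.take_append_of_le_length hl] using hpre l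
    · simp [List.take_of_length_le hl.le, hu]
  · simpa [List.take_length_add_append, hu] using hpre (u.length + l)

def IsPrimitive (u : Word) : Prop :=
  u ≠ [] ∧ cb u = 0 ∧ ∀ l : ℕ, 0 < l → l < u.length → 0 < cb (u.take l)

lemma IsPrimitive.eq_of_prefix {u u' : Word} (hu' : IsPrimitive u') (h : u <+: u')
    (hne : u ≠ []) (hcb : cb u = 0) : u = u' := by
  rcases h.length_le.lt_or_eq with hlt | heq
  · have hpos := hu'.2.2 u.length (List.length_pos_of_ne_nil hne) hlt
    rw [← List.prefix_iff_eq_take.mp h, hcb] at hpos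
    exact absurd hpos (lt_irrefl 0)
  · exact h.eq_of_length heq

lemma cat_injective_of_isPrimitive :
    ∀ {U U' : List Word}, (∀ u ∈ U, IsPrimitive u) → (∀ u ∈ U', IsPrimitive u) →
      cat U = cat U' → U = U'
  | [], [], _, _, _ => rfl
  | [], u' :: _, _, hU', h => absurd h.symm (by simp [(hU' u' (by simp)).1])
  | u :: _, [], hU, _, h => absurd h (by simp [(hU u (by simp)).1])
  | u :: U, u' :: U', hU, hU', h => by
    have hu := hU u (by simp)
    have hu' := hU' u' (by simp)
    have hpre : u <+: u' ++ cat U' := by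
      rw [← cat_cons, ← h]; exact List.prefix_append u (cat U)
    have hpre' : u' <+: u' ++ cat U' := List.prefix_append u' (cat U')
    have heq : u = u' := by
      rcases List.prefix_or_prefix_of_prefix hpre hpre' with h₁ | h₁
      · exact hu'.eq_of_prefix h₁ hu.1 hu.2.1
      · exact (hu.eq_of_prefix h₁ hu'.1 hu'.2.1).symm
    subst heq
    rw [cat_cons, cat_cons, List.append_cancel_left_eq] at h
    rw [cat_injective_of_isPrimitive (fun x hx => hU x (by simp [hx]))
      (fun x hx => hU' x (by simp [hx])) h]

lemma isPrimitive_aw {w : Word} (hw : w ∈ WcircInf) : IsPrimitive (aw w) := by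
  refine ⟨by simp [aw], by rw [cb_aw, hw.1], fun l hl0 hl => ?_⟩
  obtain ⟨l, rfl⟩ := Nat.exists_eq_add_one_of_ne_zero hl0.ne'
  rw [cb_take_aw_succ (by simp [aw] at hl; omega)]
  linarith [hw.2 l]

lemma IsPrimitive.exists_eq_aw {u : Word} (hu : IsPrimitive u) : ∃ w, u = aw w := by
  obtain ⟨hne, hcb, hpos⟩ := hu
  obtain ⟨b, s, rfl⟩ := List.exists_cons_of_ne_nil hne
  rcases List.eq_nil_or_concat' s with rfl | ⟨w, x, rfl⟩
  · cases b <;> simp at hcb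
  have hb : 0 < cb ((b :: (w ++ [x])).take 1) := hpos 1 (by omega) (by simp)
  have hw : 0 < cb ((b :: (w ++ [x])).take (w.length + 1)) := hpos _ (by omega) (by simp)
  simp only [List.take_succ_cons, List.take_zero, List.take_left', cb_cons, cb_nil] at hb hw
  obtain rfl : b = true := by cases b <;> simp_all
  obtain rfl : x = false := by
    cases x
    · rfl
    · simp at hw hcb; omega
  exact ⟨w, rfl⟩

lemma mem_Wcirc_of_aw {k : ℕ} {w : Word} (h : aw w ∈ Wcirc (k + 1)) (hp : IsPrimitive (aw w)) :
    w ∈ Wcirc k := by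
  refine ⟨by rw [← cb_aw, h.1], fun l => ?_⟩
  rcases le_or_gt l w.length with hl | hl
  · have hpos := hp.2.2 (l + 1) (by omega) (by simp [aw]; omega)
    have hle := (h.2 (l + 1)).2
    rw [cb_take_aw_succ hl] at hpos hle
    push_cast at hle
    constructor <;> linarith
  · rw [List.take_of_length_le hl.le, ← cb_aw, h.1]
    simp

lemma exists_isPrimitive_prefix {v : Word} (hv : v ∈ WcircInf) (hne : v ≠ []) :
    ∃ u r, v = u ++ r ∧ IsPrimitive u := by
  classical
  have hex : ∃ m, 0 < m ∧ cb (v.take m) = 0 :=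
    ⟨v.length, List.length_pos_of_ne_nil hne, by simpa using hv.1⟩
  set m := Nat.find hex
  obtain ⟨hm0, hmcb⟩ : 0 < m ∧ cb (v.take m) = 0 := Nat.find_spec hex
  refine ⟨v.take m, v.drop m, (List.take_append_drop m v).symm,
    by simp [List.take_eq_nil_iff, hm0.ne', hne], hmcb, fun l hl0 hl => ?_⟩
  have hlm : l < m := lt_of_lt_of_le hl (List.length_take_le m v)
  rw [List.take_take, min_eq_left hlm.le]
  exact lt_of_le_of_ne (hv.2 l) (Ne.symm fun h => Nat.find_min hex hlm ⟨hl0, h⟩)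

lemma exists_aw_factorization {k : ℕ} {v : Word} (hv : v ∈ Wcirc (k + 1)) :
    ∃ L : List Word, (∀ w ∈ L, w ∈ Wcirc k) ∧ v = cat (L.map aw) := by
  induction hlen : v.length using Nat.strong_induction_on generalizing v with
  | _ n ih =>
  rcases eq_or_ne v [] with rfl | hne
  · exact ⟨[], by simp⟩
  obtain ⟨u, r, rfl, hu⟩ := exists_isPrimitive_prefix (Wcirc_subset_WcircInf _ hv) hne
  obtain ⟨w, rfl⟩ := hu.exists_eq_aw
  obtain ⟨hw, hr⟩ := mem_Wcirc_of_append hu.2.1 hv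
  obtain ⟨L, hL, rfl⟩ := ih r.length (by simp [← hlen, aw]; omega) hr rfl
  exact ⟨w :: L, by simpa using ⟨mem_Wcirc_of_aw hw hu, hL⟩, rfl⟩

/-- every `v ∈ W^(◦,k+1)` has a unique decomposition
`v = a(w¹)⋯a(wⁿ)` with each `wⁱ ∈ W^(◦,k)` and all proper nonempty prefixes of
each factor `a(wⁱ)` of strictly positive balance. -/
theorem stmt10 (k : ℕ) (v : Word) (hv : v ∈ Wcirc (k+1)) :
    ∃! L : List Word,
      (∀ w ∈ L, w ∈ Wcirc k) ∧ v = cat (L.map aw) ∧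
      ∀ w ∈ L, ∀ l : ℕ, 0 < l → l < (aw w).length → 0 < cb ((aw w).take l) := by
  have hprim : ∀ {L : List Word}, (∀ w ∈ L, w ∈ Wcirc k) → ∀ u ∈ L.map aw, IsPrimitive u := by
    intro L hL u hu
    obtain ⟨w, hw, rfl⟩ := List.mem_map.mp hu
    exact isPrimitive_aw (Wcirc_subset_WcircInf k (hL w hw))
  obtain ⟨L, hL, hcat⟩ := exists_aw_factorization hv
  refine ⟨L, ⟨hL, hcat, fun w hw => (hprim hL (aw w) (List.mem_map_of_mem hw)).2.2⟩, ?_⟩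
  rintro L' ⟨hL', hcat', -⟩
  exact List.map_injective_iff.mpr aw_injective
    (cat_injective_of_isPrimitive (hprim hL') (hprim hL) (hcat'.symm.trans hcat))
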